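/- arXiv:1709.06802 — 3 statements merged into one kernel-verified Lean document; each statement's English description precedes it below -/
import Mathlib

section
/- Let u be a harmonic function in the upper half plane ℍ with sup_{z ∈ ℍ} Im(z) |∇u(z)| ≤ A, let M > 0, let I ⊂ ℝ be a closed interval, and let F(I) be the family of maximal dyadic subintervals I_j ⊂ I such that |u(z_{I_j}) − u(z_I)| ≥ M. Then |u(z) − u(z_I)| ≤ M + A√2 for every z ∈ Q(I) \ ∪_{I_j ∈ F(I)} Q(I_j); in particular |u(z_{I_j}) − u(z_I)| ≤ M + A√2 for every I_j ∈ F(I). -/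
/-!
Let `z = x + iy ∈ Q(I)` lie outside every `Q(I_j)`, and let `J ∋ x` be the dyadic subinterval with
`|J|/2 ≤ y < |J|`. Then `z ∈ Q(J)`, so `J` is contained in no `I_j`; hence `J` fails the selection
rule and `|u(z_J) - u(z_I)| < M`. For `I_j ∈ F(I)` the same holds for the parent of `I_j`. In both
cases the two points sit at height at least `r` with coordinates differing by at most `r`, and
the bound `|∇u| ≤ A / r` on `{Im ≥ r}` gives `|u(z) - u(w)| ≤ (A / r) · √2 r = A√2`.
-/

open Set Metric MeasureTheory Filter Topology
open scoped ENNReal NNReal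

noncomputable section

/-- The open upper half plane in `ℂ`. -/
def UHP : Set ℂ := {z : ℂ | 0 < z.im}

/-- The `α`-dimensional Hausdorff content of a set. -/
def hContent {X : Type*} [PseudoEMetricSpace X] (α : ℝ) (A : Set X) : ℝ≥0∞ :=
  ⨅ (E : ℕ → Set X) (_ : A ⊆ ⋃ n, E n), ∑' n, EMetric.diam (E n) ^ α

/-- `Ω` is a `C`-John domain with center `z₀`: every point of `Ω` can be joined to `z₀`
by a rectifiable curve in `Ω` along which the distance to the boundary dominates
(up to the factor `C`) the length of the subcurve already traversed. -/
def IsJohnDomain (C : ℝ) (Ω : Set ℂ) (z₀ : ℂ) : Prop :=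
  z₀ ∈ Ω ∧ ∀ z ∈ Ω, ∃ γ : ℝ → ℂ,
    ContinuousOn γ (Set.Icc 0 1) ∧ γ 0 = z ∧ γ 1 = z₀ ∧
    (∀ t ∈ Set.Icc (0:ℝ) 1, γ t ∈ Ω) ∧
    eVariationOn γ (Set.Icc 0 1) ≠ ⊤ ∧
    ∀ t ∈ Set.Icc (0:ℝ) 1,
      (eVariationOn γ (Set.Icc 0 t)).toReal ≤ C * infDist (γ t) (frontier Ω)

/-- `u` is harmonic on the upper half plane: it is `C²` there and satisfies
`u_xx + u_yy = 0`. -/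
def HarmonicOnH (u : ℂ → ℝ) : Prop :=
  ContDiffOn ℝ 2 u UHP ∧ ∀ z ∈ UHP,
    fderiv ℝ (fun w => fderiv ℝ u w 1) z 1 +
      fderiv ℝ (fun w => fderiv ℝ u w Complex.I) z Complex.I = 0

/-- For an interval `I = [c, d]`, the point `z_I = x_I + i |I|` where `x_I` is the center. -/
def zI (c d : ℝ) : ℂ := ((c + d) / 2 : ℝ) + (d - c) * Complex.I

/-- The square `Q(I) = {x + iy : x ∈ I, 0 < y < |I|}` over the interval `I = [c, d]`. -/
def Qsq (c d : ℝ) : Set ℂ := {z : ℂ | z.re ∈ Set.Icc c d ∧ z.im ∈ Set.Ioo 0 (d - c)}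

/-- `[c, d]` is a dyadic subinterval of `[a, b]`, i.e. obtained by repeated bisection. -/
def IsDyadicSub (a b c d : ℝ) : Prop :=
  ∃ n k : ℕ, k < 2 ^ n ∧ c = a + k * (b - a) / 2 ^ n ∧ d = a + (k + 1) * (b - a) / 2 ^ n

/-- The family `F(I)` of maximal dyadic subintervals `J` of `I = [a, b]` with
`|u(z_J) - u(z_I)| ≥ M`, encoded as pairs of endpoints. -/
def MaxF (u : ℂ → ℝ) (a b M : ℝ) : Set (ℝ × ℝ) :=
  {p : ℝ × ℝ | IsDyadicSub a b p.1 p.2 ∧ M ≤ |u (zI p.1 p.2) - u (zI a b)| ∧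
    ∀ c d : ℝ, IsDyadicSub a b c d → M ≤ |u (zI c d) - u (zI a b)| →
      Set.Icc p.1 p.2 ⊆ Set.Icc c d → c = p.1 ∧ d = p.2}

/-- The set `G(I)` of points `x` of `I = [a, b]` over whose whole vertical segment in `Q(I)`
the oscillation `|u - u(z_I)|` is at most `M + A√2`. -/
def GSet (u : ℂ → ℝ) (a b M A : ℝ) : Set ℝ :=
  {x ∈ Set.Icc a b | ∀ y : ℝ, 0 < y → y < b - a →
    |u ((x : ℂ) + y * Complex.I) - u (zI a b)| ≤ M + A * Real.sqrt 2}

/-- The sawtooth region `S(E)` over `E ⊆ (x₀ - y₀/2, x₀ + y₀/2)`. -/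
def Sawtooth (E : Set ℝ) (x₀ y₀ : ℝ) : Set ℂ :=
  {z : ℂ | z.re ∈ Set.Ioo (x₀ - y₀ / 2) (x₀ + y₀ / 2) ∧ 0 < z.im ∧
    infDist z.re E ≤ z.im ∧ z.im < y₀}

@[simp] lemma zI_re (c d : ℝ) : (zI c d).re = (c + d) / 2 := by simp [zI]

@[simp] lemma zI_im (c d : ℝ) : (zI c d).im = d - c := by simp [zI]

lemma Qsq_subset_Qsq {c d c' d' : ℝ} (hcd : c ≤ d) (h : Icc c d ⊆ Icc c' d') :
    Qsq c d ⊆ Qsq c' d' := by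
  obtain ⟨hc, hd⟩ := (Icc_subset_Icc_iff hcd).mp h
  rintro z ⟨hre, him_pos, him_lt⟩
  exact ⟨h hre, him_pos, by linarith⟩

section Gradient

variable {E : Type*} [NormedAddCommGroup E] [NormedSpace ℝ E] {u : ℂ → E} {A r : ℝ} {z w : ℂ}

lemma norm_sub_le_of_im_mul_norm_fderiv_le (hu : DifferentiableOn ℝ u UHP)
    (hb : ∀ z ∈ UHP, z.im * ‖fderiv ℝ u z‖ ≤ A) (hr : 0 < r) (hz : r ≤ z.im) (hw : r ≤ w.im) :
    ‖u z - u w‖ ≤ A / r * ‖z - w‖ := by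
  have hUHP : {v : ℂ | r ≤ v.im} ⊆ UHP := fun v hv => hr.trans_le hv
  refine (convex_halfSpace_im_ge r).norm_image_sub_le_of_norm_fderiv_le
    (fun v hv => hu.differentiableAt (isOpen_lt continuous_const Complex.continuous_im
      |>.mem_nhds (hUHP hv))) (fun v hv => ?_) hw hz
  rw [le_div_iff₀ hr]
  calc ‖fderiv ℝ u v‖ * r ≤ v.im * ‖fderiv ℝ u v‖ := by rw [mul_comm]; gcongr; exact hv
    _ ≤ A := hb v (hUHP hv)

lemma norm_sub_le_mul_sqrt_two (hu : DifferentiableOn ℝ u UHP)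
    (hb : ∀ z ∈ UHP, z.im * ‖fderiv ℝ u z‖ ≤ A) (hr : 0 < r) (hz : r ≤ z.im) (hw : r ≤ w.im)
    (hre : |(z - w).re| ≤ r) (him : |(z - w).im| ≤ r) :
    ‖u z - u w‖ ≤ A * √2 := by
  have hA : 0 ≤ A := (mul_nonneg (hr.le.trans hz) (norm_nonneg _)).trans (hb z (hr.trans_le hz))
  have hzw : ‖z - w‖ ≤ √2 * r :=
    (Complex.norm_le_sqrt_two_mul_max _).trans (by gcongr; exact max_le hre him)
  calc ‖u z - u w‖ ≤ A / r * ‖z - w‖ := norm_sub_le_of_im_mul_norm_fderiv_le hu hb hr hz hw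
    _ ≤ A / r * (√2 * r) := by gcongr
    _ = A * √2 := by field_simp

end Gradient

lemma exists_div_two_pow_succ_le_lt {y L : ℝ} (hy : 0 < y) (hyL : y < L) :
    ∃ n : ℕ, L / 2 ^ (n + 1) ≤ y ∧ y < L / 2 ^ n := by
  classical
  have hex : ∃ n : ℕ, L / 2 ^ (n + 1) ≤ y := by
    obtain ⟨n, hn⟩ := pow_unbounded_of_one_lt (L / y) one_lt_two
    refine ⟨n, (div_le_iff₀ (by positivity)).mpr ?_⟩
    rw [div_lt_iff₀ hy] at hn
    rw [pow_succ]
    nlinarith [pow_pos (two_pos (α := ℝ)) n]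
  refine ⟨Nat.find hex, Nat.find_spec hex, ?_⟩
  cases h : Nat.find hex with
  | zero => simpa using hyL
  | succ m => exact not_le.mp (Nat.find_min hex (by omega))

def IsDyadicAt (a b : ℝ) (n : ℕ) (c d : ℝ) : Prop :=
  ∃ k : ℕ, k < 2 ^ n ∧ c = a + k * (b - a) / 2 ^ n ∧ d = a + (k + 1) * (b - a) / 2 ^ n

section Dyadic

variable {a b c d : ℝ} {n : ℕ}

lemma IsDyadicAt.sub_eq (h : IsDyadicAt a b n c d) : d - c = (b - a) / 2 ^ n := by
  obtain ⟨k, -, rfl, rfl⟩ := h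
  ring

lemma IsDyadicAt.le (hab : a ≤ b) (h : IsDyadicAt a b n c d) : c ≤ d := by
  have : 0 ≤ (b - a) / 2 ^ n := div_nonneg (sub_nonneg.mpr hab) (by positivity)
  linarith [h.sub_eq]

lemma IsDyadicAt.eq_of_zero (h : IsDyadicAt a b 0 c d) : c = a ∧ d = b := by
  obtain ⟨k, hk, rfl, rfl⟩ := h
  obtain rfl : k = 0 := by simpa using hk
  constructor <;> simp

lemma exists_nat_le_le_succ {t : ℝ} {N : ℕ} (hN : 0 < N) (ht : 0 ≤ t) (htN : t ≤ N) :
    ∃ k < N, (k : ℝ) ≤ t ∧ t ≤ k + 1 := by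
  rcases htN.lt_or_eq with htN | rfl
  · exact ⟨⌊t⌋₊, (Nat.floor_lt ht).mpr htN, Nat.floor_le ht, (Nat.lt_floor_add_one t).le⟩
  · exact ⟨N - 1, by omega, by simp, by rw [Nat.cast_sub hN]; simp⟩

lemma exists_isDyadicAt_mem (hab : a < b) {x : ℝ} (hx : x ∈ Icc a b) (n : ℕ) :
    ∃ c d, IsDyadicAt a b n c d ∧ x ∈ Icc c d := by
  have hba : 0 < b - a := sub_pos.mpr hab
  have hh : 0 < (b - a) / 2 ^ n := by positivity
  have ht : 0 ≤ (x - a) / ((b - a) / 2 ^ n) := div_nonneg (sub_nonneg.mpr hx.1) hh.le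
  have htN : (x - a) / ((b - a) / 2 ^ n) ≤ ((2 ^ n : ℕ) : ℝ) := by
    rw [div_le_iff₀ hh, Nat.cast_pow, Nat.cast_ofNat, mul_div_cancel₀ _ (by positivity)]
    linarith [hx.2]
  obtain ⟨k, hk, hkt, htk⟩ := exists_nat_le_le_succ (Nat.two_pow_pos n) ht htN
  have hx_eq : x = a + (x - a) / ((b - a) / 2 ^ n) * ((b - a) / 2 ^ n) := by field_simp; ring
  refine ⟨_, _, ⟨k, hk, rfl, rfl⟩, ?_, ?_⟩
  · rw [hx_eq, mul_div_assoc]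
    gcongr
  · rw [hx_eq, mul_div_assoc]
    gcongr

lemma IsDyadicAt.exists_parent (hab : a ≤ b) (h : IsDyadicAt a b (n + 1) c d) :
    ∃ c' d', IsDyadicAt a b n c' d' ∧ Icc c d ⊆ Icc c' d' := by
  obtain ⟨k, hk, rfl, rfl⟩ := h
  have hh : 0 ≤ (b - a) / 2 ^ (n + 1) := div_nonneg (sub_nonneg.mpr hab) (by positivity)
  have hrescale : ∀ p : ℝ, a + p * (b - a) / 2 ^ n = a + 2 * p * ((b - a) / 2 ^ (n + 1)) := by
    intro p
    rw [pow_succ]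
    ring
  refine ⟨_, _, ⟨k / 2, by rw [pow_succ] at hk; omega, rfl, rfl⟩, Icc_subset_Icc ?_ ?_⟩
  · rw [hrescale, mul_div_assoc]
    gcongr
    exact_mod_cast Nat.mul_div_le k 2
  · rw [hrescale, mul_div_assoc]
    gcongr
    exact_mod_cast (by omega : k + 1 ≤ 2 * (k / 2 + 1))

lemma exists_maximal_isDyadicSub (P : ℝ → ℝ → Prop) (hab : a ≤ b) (h : IsDyadicSub a b c d)
    (hP : P c d) :
    ∃ c' d', (IsDyadicSub a b c' d' ∧ P c' d' ∧
      ∀ c'' d'', IsDyadicSub a b c'' d'' → P c'' d'' → Icc c' d' ⊆ Icc c'' d'' →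
        c'' = c' ∧ d'' = d') ∧ Icc c d ⊆ Icc c' d' := by
  classical
  have hex : ∃ n c' d', IsDyadicAt a b n c' d' ∧ P c' d' ∧ Icc c d ⊆ Icc c' d' := by
    obtain ⟨n, hn⟩ := h
    exact ⟨n, c, d, hn, hP, subset_rfl⟩
  -- a coarsest candidate is maximal: a larger one would be at least as coarse, hence no shorter
  obtain ⟨c', d', hdy, hP', hsub⟩ := Nat.find_spec hex
  refine ⟨c', d', ⟨⟨_, hdy⟩, hP', ?_⟩, hsub⟩
  rintro c'' d'' ⟨m, hm : IsDyadicAt a b m c'' d''⟩ hP'' hsub'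
  have hle : Nat.find hex ≤ m := Nat.find_min' hex ⟨c'', d'', hm, hP'', hsub.trans hsub'⟩
  obtain ⟨h₁, h₂⟩ := (Icc_subset_Icc_iff (hdy.le hab)).mp hsub'
  have : d'' - c'' ≤ d' - c' := by
    rw [hm.sub_eq, hdy.sub_eq]
    exact div_le_div_of_nonneg_left (sub_nonneg.mpr hab) (by positivity)
      (pow_le_pow_right₀ one_le_two hle)
  constructor <;> linarith

end Dyadic

section Oscillation

variable {u : ℂ → ℝ} {A M a b : ℝ}

lemma abs_sub_zI_le_of_mem_Qsq_diff (hu : DifferentiableOn ℝ u UHP)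
    (hb : ∀ z ∈ UHP, z.im * ‖fderiv ℝ u z‖ ≤ A) (hab : a < b) {z : ℂ}
    (hz : z ∈ Qsq a b \ ⋃ p ∈ MaxF u a b M, Qsq p.1 p.2) :
    |u z - u (zI a b)| ≤ M + A * √2 := by
  obtain ⟨⟨hre, hy, hyI⟩, hzF⟩ := hz
  obtain ⟨n, hn₁, hn₂⟩ := exists_div_two_pow_succ_le_lt hy hyI
  obtain ⟨c, d, hJ, hxJ⟩ := exists_isDyadicAt_mem hab hre n
  have hlen : d - c = (b - a) / 2 ^ n := hJ.sub_eq
  have hhalf : (d - c) / 2 ≤ z.im := by rwa [hlen, div_div, ← pow_succ]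
  have hzJ : z ∈ Qsq c d := ⟨hxJ, hy, hlen ▸ hn₂⟩
  have hJ_small : |u (zI c d) - u (zI a b)| < M := by
    by_contra! hJM
    obtain ⟨c', d', hmax, hsub⟩ := exists_maximal_isDyadicSub
      (fun c d => M ≤ |u (zI c d) - u (zI a b)|) hab.le ⟨n, hJ⟩ hJM
    exact hzF (mem_biUnion (x := (c', d')) hmax (Qsq_subset_Qsq (hJ.le hab.le) hsub hzJ))
  have hJ_near : |u z - u (zI c d)| ≤ A * √2 := by
    refine norm_sub_le_mul_sqrt_two hu hb (r := (d - c) / 2) (by linarith) hhalf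
      (by simp only [zI_im]; linarith) ?_ ?_
    · simp only [Complex.sub_re, zI_re, abs_le]
      constructor <;> linarith [hxJ.1, hxJ.2]
    · simp only [Complex.sub_im, zI_im, abs_le]
      constructor <;> linarith
  calc |u z - u (zI a b)| ≤ |u z - u (zI c d)| + |u (zI c d) - u (zI a b)| := abs_sub_le _ _ _
    _ ≤ M + A * √2 := by linarith

lemma abs_sub_zI_le_of_mem_MaxF (hM : 0 < M) (hu : DifferentiableOn ℝ u UHP)
    (hb : ∀ z ∈ UHP, z.im * ‖fderiv ℝ u z‖ ≤ A) (hab : a < b) {p : ℝ × ℝ}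
    (hp : p ∈ MaxF u a b M) :
    |u (zI p.1 p.2) - u (zI a b)| ≤ M + A * √2 := by
  obtain ⟨⟨n, hn : IsDyadicAt a b n p.1 p.2⟩, hpM, hmax⟩ := hp
  -- `0 < M` excludes `[a, b]` itself, so `p` has a parent; maximality keeps the parent below `M`
  obtain ⟨n, rfl⟩ : ∃ m, n = m + 1 := by
    refine Nat.exists_eq_succ_of_ne_zero ?_
    rintro rfl
    obtain ⟨h₁, h₂⟩ := hn.eq_of_zero
    rw [h₁, h₂, sub_self, abs_zero] at hpM
    linarith
  obtain ⟨c', d', hpar, hsub⟩ := hn.exists_parent hab.le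
  have hlen : p.2 - p.1 = (b - a) / 2 ^ (n + 1) := hn.sub_eq
  have hlen_par : d' - c' = 2 * (p.2 - p.1) := by rw [hpar.sub_eq, hlen, pow_succ]; field_simp
  have hpos : 0 < p.2 - p.1 := by rw [hlen]; exact div_pos (sub_pos.mpr hab) (by positivity)
  have hpar_small : |u (zI c' d') - u (zI a b)| < M := by
    by_contra! h
    obtain ⟨rfl, rfl⟩ := hmax c' d' ⟨n, hpar⟩ h hsub
    linarith
  have hpar_near : |u (zI p.1 p.2) - u (zI c' d')| ≤ A * √2 := by
    obtain ⟨h₁, h₂⟩ := (Icc_subset_Icc_iff (hn.le hab.le)).mp hsub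
    refine norm_sub_le_mul_sqrt_two hu hb hpos (by simp) (by simp only [zI_im]; linarith) ?_ ?_
    · simp only [Complex.sub_re, zI_re, abs_le]
      constructor <;> linarith
    · simp only [Complex.sub_im, zI_im, abs_le]
      constructor <;> linarith
  calc |u (zI p.1 p.2) - u (zI a b)|
      ≤ |u (zI p.1 p.2) - u (zI c' d')| + |u (zI c' d') - u (zI a b)| := abs_sub_le _ _ _
    _ ≤ M + A * √2 := by linarith

end Oscillation

/-- outside the squares over the maximal dyadic subintervals where
`|u(z_J) - u(z_I)| ≥ M`, the oscillation of `u` is at most `M + A√2`; in particular this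
bound holds at the points `z_{I_j}`. -/
theorem maximal_family_oscillation (u : ℂ → ℝ) (A M : ℝ) (hM : 0 < M)
    (hh : HarmonicOnH u) (hb : ∀ z ∈ UHP, z.im * ‖fderiv ℝ u z‖ ≤ A)
    (a b : ℝ) (hab : a < b) :
    (∀ z ∈ Qsq a b \ ⋃ p ∈ MaxF u a b M, Qsq p.1 p.2,
        |u z - u (zI a b)| ≤ M + A * Real.sqrt 2) ∧
    ∀ p ∈ MaxF u a b M, |u (zI p.1 p.2) - u (zI a b)| ≤ M + A * Real.sqrt 2 := by
  have hu : DifferentiableOn ℝ u UHP := hh.1.differentiableOn two_ne_zero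
  exact ⟨fun z hz => abs_sub_zI_le_of_mem_Qsq_diff hu hb hab hz,
    fun p hp => abs_sub_zI_le_of_mem_MaxF hM hu hb hab hp⟩
end
end

section
/- Let u be a harmonic function in the upper half plane ℍ with sup_{z ∈ ℍ} Im(z) |∇u(z)| ≤ A, let M > 0, let I ⊂ ℝ be a closed interval, and let F(I) be the family of maximal dyadic subintervals I_j ⊂ I such that |u(z_{I_j}) − u(z_I)| ≥ M. Then every I_j ∈ F(I) satisfies |I_j| ≤ 2^{−M/(A√2)} |I|. -/
open Set Metric MeasureTheory Filter Topology
open scoped ENNReal NNReal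

noncomputable section

/-!
A gradient bound `Im z · ‖∇u(z)‖ ≤ A` makes `u` Lipschitz with constant `A / m` on the half-plane
`{Im z ≥ m}`. Passing from a dyadic interval to one of its two halves moves `z_I` by at most `√2`
times the half's length while staying at height at least that length, so it changes `u` by at
most `A√2`. Hence a dyadic subinterval `J` of `I` of generation `n` has
`|u(z_J) - u(z_I)| ≤ n A√2`; if this is at least `M`, then `n ≥ M / (A√2)` and
`|J| = 2^{-n} |I| ≤ 2^{-M/(A√2)} |I|`.
-/

lemma isOpen_UHP : IsOpen UHP := isOpen_Ioi.preimage Complex.continuous_im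

lemma HarmonicOnH.differentiableAt {u : ℂ → ℝ} (hu : HarmonicOnH u) {z : ℂ} (hz : z ∈ UHP) :
    DifferentiableAt ℝ u z :=
  (hu.1.differentiableOn (by norm_num)).differentiableAt (isOpen_UHP.mem_nhds hz)

lemma nonneg_of_forall_im_mul_norm_fderiv_le {u : ℂ → ℝ} {A : ℝ}
    (hb : ∀ z ∈ UHP, z.im * ‖fderiv ℝ u z‖ ≤ A) : 0 ≤ A := by
  have h := hb Complex.I (by simp [UHP])
  rw [Complex.I_im, one_mul] at h
  exact (norm_nonneg _).trans h

lemma abs_sub_le_of_le_im {u : ℂ → ℝ} {A : ℝ} (hd : ∀ z ∈ UHP, DifferentiableAt ℝ u z)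
    (hb : ∀ z ∈ UHP, z.im * ‖fderiv ℝ u z‖ ≤ A) {m : ℝ} (hm : 0 < m) {z w : ℂ}
    (hz : m ≤ z.im) (hw : m ≤ w.im) :
    |u z - u w| ≤ A / m * ‖z - w‖ := by
  set s : Set ℂ := {z : ℂ | m ≤ z.im}
  have hconv : Convex ℝ s := convex_halfSpace_ge Complex.imLm.isLinear m
  have hsub : s ⊆ UHP := fun x (hx : m ≤ x.im) => hm.trans_le hx
  have hint : (interior s).Nonempty :=
    ⟨(m + 1) * Complex.I, interior_maximal (t := {z : ℂ | m < z.im})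
      (fun (x : ℂ) (hx : m < x.im) => hx.le) (isOpen_Ioi.preimage Complex.continuous_im) (by simp)⟩
  have hud : UniqueDiffOn ℝ s := uniqueDiffOn_convex hconv hint
  have hbound : ∀ x ∈ s, ‖fderivWithin ℝ u s x‖ ≤ A / m := by
    intro x (hx : m ≤ x.im)
    rw [(hd x (hsub hx)).fderivWithin (hud x hx), le_div_iff₀ hm]
    calc ‖fderiv ℝ u x‖ * m ≤ x.im * ‖fderiv ℝ u x‖ := by rw [mul_comm]; gcongr
      _ ≤ A := hb x (hsub hx)
  simpa [Real.norm_eq_abs] using hconv.norm_image_sub_le_of_norm_fderivWithin_le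
    (fun x hx => (hd x (hsub hx)).differentiableWithinAt) hbound hw hz

lemma norm_zI_sub_zI_le {c d c' d' : ℝ} (hlen : d - c = 2 * (d' - c'))
    (hmid : |(c' + d') / 2 - (c + d) / 2| ≤ (d' - c') / 2) (hpos : 0 < d' - c') :
    ‖zI c' d' - zI c d‖ ≤ √2 * (d' - c') := by
  refine (Complex.norm_le_sqrt_two_mul_max _).trans ?_
  gcongr
  have him : (zI c' d' - zI c d).im = -(d' - c') := by simp [zI]; linarith
  simp only [him, abs_neg, abs_of_pos hpos, max_le_iff, le_refl, and_true]
  simpa [zI] using hmid.trans (by linarith)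

lemma abs_sub_zI_le_of_half {u : ℂ → ℝ} {A : ℝ} (hd : ∀ z ∈ UHP, DifferentiableAt ℝ u z)
    (hb : ∀ z ∈ UHP, z.im * ‖fderiv ℝ u z‖ ≤ A) {c d c' d' : ℝ} (hlen : d - c = 2 * (d' - c'))
    (hmid : |(c' + d') / 2 - (c + d) / 2| ≤ (d' - c') / 2) (hpos : 0 < d' - c') :
    |u (zI c' d') - u (zI c d)| ≤ A * √2 := by
  have hA := nonneg_of_forall_im_mul_norm_fderiv_le hb
  calc |u (zI c' d') - u (zI c d)| ≤ A / (d' - c') * ‖zI c' d' - zI c d‖ :=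
        abs_sub_le_of_le_im hd hb hpos (by simp [zI]) (by simp [zI]; linarith)
    _ ≤ A / (d' - c') * (√2 * (d' - c')) := by gcongr; exact norm_zI_sub_zI_le hlen hmid hpos
    _ = A * √2 := by field_simp

lemma abs_sub_zI_dyadic_le {u : ℂ → ℝ} {A : ℝ} (hd : ∀ z ∈ UHP, DifferentiableAt ℝ u z)
    (hb : ∀ z ∈ UHP, z.im * ‖fderiv ℝ u z‖ ≤ A) (n : ℕ) :
    ∀ a b : ℝ, a < b → ∀ k : ℕ, k < 2 ^ n →
      |u (zI (a + k * (b - a) / 2 ^ n) (a + (k + 1) * (b - a) / 2 ^ n)) - u (zI a b)| ≤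
        n * (A * √2) := by
  induction n with
  | zero =>
    intro a b _ k hk
    obtain rfl : k = 0 := by omega
    simp
  | succ n ih =>
    intro a b hab k hk
    set m := (a + b) / 2 with hm
    have through_half {c d : ℝ} (hcd : c < d) (hlen : b - a = 2 * (d - c))
        (hmid : |(c + d) / 2 - (a + b) / 2| ≤ (d - c) / 2) (j : ℕ) (hj : j < 2 ^ n)
        (hlo : a + k * (b - a) / 2 ^ (n + 1) = c + j * (d - c) / 2 ^ n)
        (hhi : a + (k + 1) * (b - a) / 2 ^ (n + 1) = c + (j + 1) * (d - c) / 2 ^ n) :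
        |u (zI (a + k * (b - a) / 2 ^ (n + 1)) (a + (k + 1) * (b - a) / 2 ^ (n + 1))) -
          u (zI a b)| ≤ (n + 1 : ℕ) * (A * √2) := by
      rw [hlo, hhi]
      calc _ ≤ |u (zI (c + j * (d - c) / 2 ^ n) (c + (j + 1) * (d - c) / 2 ^ n)) - u (zI c d)| +
            |u (zI c d) - u (zI a b)| := abs_sub_le _ _ _
        _ ≤ n * (A * √2) + A * √2 :=
            add_le_add (ih c d hcd j hj) (abs_sub_zI_le_of_half hd hb hlen hmid (by linarith))
        _ = (n + 1 : ℕ) * (A * √2) := by push_cast; ring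
    rcases lt_or_ge k (2 ^ n) with hk' | hk'
    · refine through_half (c := a) (d := m) (by linarith) (by ring) ?_ k hk' ?_ ?_
      · rw [show (a + m) / 2 - (a + b) / 2 = -((m - a) / 2) by ring, abs_neg]
        exact le_of_eq (abs_of_pos (by linarith))
      all_goals rw [pow_succ]; field_simp; ring
    · obtain ⟨j, rfl⟩ : ∃ j, k = 2 ^ n + j := ⟨k - 2 ^ n, by omega⟩
      have hj : j < 2 ^ n := by rw [pow_succ] at hk; omega
      refine through_half (c := m) (d := b) (by linarith) (by ring) ?_ j hj ?_ ?_
      · rw [show (m + b) / 2 - (a + b) / 2 = (b - m) / 2 by ring]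
        exact le_of_eq (abs_of_pos (by linarith))
      all_goals push_cast; rw [pow_succ]; field_simp; ring

/-- every interval of the maximal family `F(I)` has length at most
`2^{-M/(A√2)} |I|`. -/
theorem maximal_family_size (u : ℂ → ℝ) (A M : ℝ) (hM : 0 < M)
    (hh : HarmonicOnH u) (hb : ∀ z ∈ UHP, z.im * ‖fderiv ℝ u z‖ ≤ A)
    (a b : ℝ) (hab : a < b) :
    ∀ p ∈ MaxF u a b M, p.2 - p.1 ≤ (2 : ℝ) ^ (-(M / (A * Real.sqrt 2))) * (b - a) := by
  rintro ⟨c, d⟩ ⟨⟨n, k, hk, rfl, rfl⟩, hMle, -⟩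
  have hMn : M ≤ n * (A * √2) :=
    hMle.trans (abs_sub_zI_dyadic_le (fun z hz => hh.differentiableAt hz) hb n a b hab k hk)
  have hpos : 0 < A * √2 := pos_of_mul_pos_right (hM.trans_le hMn) n.cast_nonneg
  calc a + (k + 1) * (b - a) / 2 ^ n - (a + k * (b - a) / 2 ^ n)
      = (2 : ℝ) ^ (-(n : ℝ)) * (b - a) := by
        rw [Real.rpow_neg zero_le_two, Real.rpow_natCast]; field_simp; ring
    _ ≤ (2 : ℝ) ^ (-(M / (A * √2))) * (b - a) := by
        gcongr
        · norm_num
        · exact (div_le_iff₀ hpos).2 hMn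
end
end

section
/- Let 0 < α < 1, let f : ℍ → ℂ be a conformal (univalent analytic) map of the upper half plane, let z₀ = x₀ + i y₀ ∈ ℍ, let E ⊂ (x₀ − y₀/2, x₀ + y₀/2) be a nonempty compact set, and suppose that (1/C(α)) |f'(z₀)| ≤ |f'(w)| ≤ C(α) |f'(z₀)| for every w in the sawtooth region S(E) := { x + iy : x ∈ (x₀ − y₀/2, x₀ + y₀/2), dist(x, E) ≤ y < y₀ }, where C(α) ≥ 1 depends only on α. Then f extends continuously to S(E) ∪ E, and the image f(E) of E under this extension satisfies H^α_∞(f(E)) ≥ c(α) |f'(z₀)|^α H^α_∞(E), where c(α) > 0 depends only on α. -/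
/-!
Let `m = |f'(z₀)|` and let `g` be the limit of `f` along vertical rays. Over each `ξ ∈ E` the
sawtooth region contains the convex truncated cone `|x - ξ| ≤ y`, on which `f` is
`C m`-Lipschitz; hence `g` exists on `E`, `|g(ξ) - f(ξ + i t)| ≤ C m t`, and `g` extends `f`
continuously to `S(E) ∪ E`.

For the content bound, take a set `F` of diameter `ρ` and `ℓ`-separated points of `E` whose
images under `g` lie in `F`, with `ℓ ≍ ρ / m`. For a point `p` away from the ends of the interval
the disc of radius `ℓ/4` about `p + iℓ/2` lies in the sawtooth region, where `|f'| ≍ m`; a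
Cauchy estimate and the quantitative inverse function theorem show that its image contains a
disc of radius `≍ m ℓ` about `f(p + iℓ/2)`, which is within `C m ℓ/2` of `g(p) ∈ F`. By
injectivity these discs are disjoint, so comparing areas bounds the number of points by a
constant depending only on `C`. Therefore `E ∩ g⁻¹(F)` is covered by boundedly many intervals
of length `≍ ρ / m`, and pulling back an arbitrary cover of `g(E)` gives
`H^α_∞(E) ≲ m^(-α) H^α_∞(g(E))`.
-/

open Set Metric MeasureTheory Filter Topology
open scoped ENNReal NNReal

noncomputable section

section HausdorffContent

variable {X : Type*} [PseudoEMetricSpace X] {α : ℝ}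

lemma hContent_eq_ofFunction (hα : 0 < α) (A : Set X) :
    hContent α A = OuterMeasure.ofFunction (fun s : Set X => ediam s ^ α)
      (by rw [ediam_empty, ENNReal.zero_rpow_of_pos hα]) A := by
  rw [OuterMeasure.ofFunction_apply]; rfl

lemma hContent_le_of_isCover (hα : 0 < α) {ε : ℝ≥0} {A C : Set X} (hC : C.Finite)
    (hcover : IsCover ε A C) : hContent α A ≤ C.encard * (2 * ε : ℝ≥0∞) ^ α := by
  rw [hContent_eq_ofFunction hα, ← hC.coe_toFinset, encard_coe_eq_coe_finsetCard,
    ENat.toENNReal_coe, ← nsmul_eq_mul]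
  refine (measure_mono (by simpa using isCover_iff_subset_iUnion_closedEBall.1 hcover)).trans
    ((measure_biUnion_finset_le _ _).trans (Finset.sum_le_card_nsmul _ _ _ fun c _ => ?_))
  exact (OuterMeasure.ofFunction_le _).trans (ENNReal.rpow_le_rpow ediam_closedEBall_le hα.le)

lemma packingNumber_le_of_forall_finset_card_le {ε : ℝ≥0} {A : Set X} {N : ℕ}
    (h : ∀ t : Finset X, ↑t ⊆ A → IsSeparated ε (t : Set X) → t.card ≤ N) :
    packingNumber ε A ≤ N := by
  simp only [packingNumber, iSup_le_iff]
  intro C hCA hC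
  by_contra! hlt
  obtain ⟨D, hDC, hD⟩ := exists_subset_encard_eq (Order.add_one_le_of_lt hlt)
  have hDfin : D.Finite := finite_of_encard_eq_coe hD
  have hcard := h hDfin.toFinset (by simpa using hDC.trans hCA) (by simpa using hC.subset hDC)
  rw [hDfin.encard_eq_coe_toFinset_card] at hD
  norm_cast at hD
  omega

lemma hContent_le_of_packingNumber_le (hα : 0 < α) {A : Set X} {N : ℕ} {ℓ₀ : ℝ≥0}
    (h : ∀ ℓ : ℝ≥0, ℓ₀ < ℓ → packingNumber ℓ A ≤ N) :
    hContent α A ≤ N * (2 * ℓ₀ : ℝ≥0∞) ^ α := by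
  have hlim : Tendsto (fun ℓ : ℝ≥0 => (N : ℝ≥0∞) * (2 * ℓ : ℝ≥0∞) ^ α) (𝓝[>] ℓ₀)
      (𝓝 (N * (2 * ℓ₀ : ℝ≥0∞) ^ α)) := by
    refine (Continuous.tendsto ?_ ℓ₀).mono_left nhdsWithin_le_nhds
    exact (ENNReal.continuous_const_mul (by simp)).comp (ENNReal.continuous_rpow_const.comp
      ((ENNReal.continuous_const_mul (by simp)).comp ENNReal.continuous_coe))
  refine ge_of_tendsto hlim (eventually_nhdsWithin_of_forall fun ℓ hℓ => ?_)
  have hfin : packingNumber ℓ A ≠ ⊤ := ((h ℓ hℓ).trans_lt (ENat.natCast_lt_top N)).ne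
  calc hContent α A ≤ (maximalSeparatedSet ℓ A).encard * (2 * ℓ : ℝ≥0∞) ^ α :=
        hContent_le_of_isCover hα (encard_ne_top_iff.1 (by rwa [encard_maximalSeparatedSet hfin]))
          (isCover_maximalSeparatedSet hfin)
    _ ≤ N * (2 * ℓ : ℝ≥0∞) ^ α := by
        gcongr
        rw [encard_maximalSeparatedSet hfin]
        exact_mod_cast h ℓ hℓ

end HausdorffContent

section Pullback

variable {X Y : Type*} {α : ℝ}

lemma mul_hContent_le_hContent_image [PseudoEMetricSpace X] [PseudoEMetricSpace Y] (hα : 0 < α)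
    {g : X → Y} {A : Set X} {c : ℝ≥0∞}
    (h : ∀ F : Set Y, c * hContent α (A ∩ g ⁻¹' F) ≤ ediam F ^ α) :
    c * hContent α A ≤ hContent α (g '' A) := by
  refine le_iInf₂ fun F hF => ?_
  have hcover : hContent α A ≤ ∑' n, hContent α (A ∩ g ⁻¹' F n) := by
    simp_rw [hContent_eq_ofFunction hα]
    refine (measure_mono fun x hx => ?_).trans (measure_iUnion_le _)
    obtain ⟨n, hn⟩ := mem_iUnion.1 (hF (mem_image_of_mem g hx))
    exact mem_iUnion.2 ⟨n, hx, hn⟩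
  calc c * hContent α A ≤ ∑' n, c * hContent α (A ∩ g ⁻¹' F n) := by
        rw [ENNReal.tsum_mul_left]; gcongr
    _ ≤ _ := ENNReal.tsum_le_tsum fun n => h (F n)

lemma ofReal_mul_hContent_le_hContent_image [PseudoMetricSpace X] [PseudoMetricSpace Y]
    (hα : 0 < α) {g : X → Y} {A : Set X} {N : ℕ} {κ : ℝ} (hκ : 0 < κ)
    (h : ∀ (F : Set Y) (ρ ℓ : ℝ), 0 < ℓ → κ * ρ < ℓ → (∀ y ∈ F, ∀ y' ∈ F, dist y y' ≤ ρ) →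
      ∀ t : Finset X, ↑t ⊆ A → (∀ x ∈ t, g x ∈ F) →
        (t : Set X).Pairwise (fun x x' => ℓ < dist x x') → t.card ≤ N) :
    ENNReal.ofReal (N * (2 * κ) ^ α)⁻¹ * hContent α A ≤ hContent α (g '' A) := by
  refine mul_hContent_le_hContent_image hα fun F => ?_
  rcases eq_top_or_lt_top (ediam F) with hF | hF
  · simp [hF, ENNReal.top_rpow_of_pos hα]
  set ρ := (ediam F).toReal with hρ
  have hρ0 : 0 ≤ ρ := ENNReal.toReal_nonneg
  have hpack : ∀ ℓ : ℝ≥0, (κ * ρ).toNNReal < ℓ → packingNumber ℓ (A ∩ g ⁻¹' F) ≤ N := by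
    refine fun ℓ hℓ => packingNumber_le_of_forall_finset_card_le fun t ht hsep => ?_
    have hκρ : κ * ρ < ℓ := (Real.toNNReal_lt_iff_lt_coe (by positivity)).1 hℓ
    refine h F ρ ℓ ((mul_nonneg hκ.le hρ0).trans_lt hκρ) hκρ
      (fun y hy y' hy' => dist_le_diam_of_mem (isBounded_iff_ediam_ne_top.2 hF.ne) hy hy')
      t (ht.trans inter_subset_left) (fun x hx => (ht hx).2) (hsep.mono' fun x y hxy => ?_)
    rwa [edist_nndist, ENNReal.coe_lt_coe, ← NNReal.coe_lt_coe, coe_nndist] at hxy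
  have hscale : (N : ℝ≥0∞) * (2 * ENNReal.ofReal (κ * ρ)) ^ α =
      ENNReal.ofReal (N * (2 * κ) ^ α * ρ ^ α) := by
    rw [← ENNReal.ofReal_natCast, ← ENNReal.ofReal_ofNat 2, ← ENNReal.ofReal_mul (by norm_num),
      ENNReal.ofReal_rpow_of_nonneg (by positivity) hα.le, ← ENNReal.ofReal_mul (by positivity),
      ← mul_assoc, Real.mul_rpow (by positivity) hρ0, mul_assoc]
  calc _ ≤ ENNReal.ofReal (N * (2 * κ) ^ α)⁻¹ * (N * (2 * ENNReal.ofReal (κ * ρ)) ^ α) := by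
        gcongr
        exact hContent_le_of_packingNumber_le hα hpack
    _ = ENNReal.ofReal ((N * (2 * κ) ^ α)⁻¹ * (N * (2 * κ) ^ α) * ρ ^ α) := by
        rw [hscale, ← ENNReal.ofReal_mul (by positivity)]
        ring_nf
    _ ≤ ENNReal.ofReal (ρ ^ α) := by
        gcongr
        rcases eq_or_ne ((N : ℝ) * (2 * κ) ^ α) 0 with h0 | h0
        · simp [h0, Real.rpow_nonneg hρ0]
        · rw [inv_mul_cancel₀ h0, one_mul]
    _ = ediam F ^ α := by
        rw [← ENNReal.ofReal_rpow_of_nonneg hρ0 hα.le, hρ, ENNReal.ofReal_toReal hF.ne]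

end Pullback

open Module in
lemma card_mul_pow_le_of_pairwiseDisjoint_closedBall {E : Type*} [NormedAddCommGroup E]
    [NormedSpace ℝ E] [FiniteDimensional ℝ E] {ι : Type*} {t : Finset ι} {c : ι → E} {w : E}
    {r R : ℝ} (hr : 0 < r) (hR : 0 ≤ R)
    (hdisj : (t : Set ι).PairwiseDisjoint fun i => closedBall (c i) r)
    (hsub : ∀ i ∈ t, closedBall (c i) r ⊆ closedBall w R) :
    t.card * r ^ finrank ℝ E ≤ R ^ finrank ℝ E := by
  let _ : MeasurableSpace E := borel E
  have : BorelSpace E := ⟨rfl⟩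
  set μ : Measure E := Measure.addHaar
  have hvol := measure_biUnion_finset (μ := μ) hdisj fun _ _ => measurableSet_closedBall
  have hle : ∑ i ∈ t, μ (closedBall (c i) r) ≤ μ (closedBall w R) :=
    hvol ▸ measure_mono (iUnion₂_subset hsub)
  simp only [Measure.addHaar_closedBall μ _ hr.le, Measure.addHaar_closedBall μ _ hR,
    Finset.sum_const, nsmul_eq_mul, ← mul_assoc] at hle
  rw [ENNReal.mul_le_mul_iff_left (measure_ball_pos μ 0 one_pos).ne' measure_ball_lt_top.ne,
    ← ENNReal.ofReal_natCast, ← ENNReal.ofReal_mul (by positivity),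
    ENNReal.ofReal_le_ofReal_iff (by positivity)] at hle
  exact hle

lemma card_le_one_of_pairwise_lt_dist {X : Type*} [PseudoMetricSpace X] {t : Finset X} {ℓ : ℝ}
    (hsep : (t : Set X).Pairwise fun p q => ℓ < dist p q)
    (hdiam : ∀ p ∈ t, ∀ q ∈ t, dist p q ≤ ℓ) : t.card ≤ 1 :=
  Finset.card_le_one.2 fun p hp q hq =>
    by_contra fun hne => (hsep hp hq hne).not_ge (hdiam p hp q hq)

section ImageDiscs

variable {f : ℂ → ℂ}

lemma dist_deriv_le_of_norm_deriv_le {c z : ℂ} {R b : ℝ} (hf : DifferentiableOn ℂ f (ball c R))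
    (hb : ∀ w ∈ ball c R, ‖deriv f w‖ ≤ b) (hz : z ∈ ball c R) :
    dist (deriv f z) (deriv f c) ≤ 2 * b / R * dist z c := by
  have hc : c ∈ ball c R := mem_ball_self (pos_of_mem_ball hz)
  refine Complex.dist_le_div_mul_dist_of_mapsTo_ball (hf.deriv isOpen_ball) (fun w hw => ?_) hz
  rw [mem_closedBall, dist_eq_norm, two_mul]
  exact (norm_sub_le _ _).trans (add_le_add (hb w hw) (hb c hc))

lemma closedBall_subset_image_of_norm_deriv_sub_le {z a : ℂ} {ρ : ℝ} (hρ : 0 ≤ ρ) (ha : a ≠ 0)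
    (hf : ∀ w ∈ closedBall z ρ, DifferentiableAt ℂ f w)
    (hosc : ∀ w ∈ closedBall z ρ, ‖deriv f w - a‖ ≤ ‖a‖ / 4) :
    closedBall (f z) (3 / 4 * ‖a‖ * ρ) ⊆ f '' closedBall z ρ := by
  set L : ℂ →L[ℂ] ℂ := a • ContinuousLinearMap.id ℂ ℂ
  have happrox : ApproximatesLinearOn f L (closedBall z ρ) (‖a‖ / 4).toNNReal := by
    intro x hx y hy
    have hderiv : ∀ w ∈ closedBall z ρ,
        HasDerivWithinAt (fun w => f w - w * a) (deriv f w - a) (closedBall z ρ) w := fun w hw =>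
      (((hf w hw).hasDerivAt.sub ((hasDerivAt_id w).mul_const a)).congr_deriv (by simp))
        |>.hasDerivWithinAt
    have hmvt := (convex_closedBall z ρ).norm_image_sub_le_of_norm_hasDerivWithin_le hderiv hosc
      hy hx
    rw [Real.coe_toNNReal _ (by positivity)]
    convert hmvt using 2
    simp only [L, FunLike.coe_smul, Pi.smul_apply, ContinuousLinearMap.id_apply, smul_eq_mul]
    ring
  have hsurj := happrox.surjOn_closedBall_of_nonlinearRightInverse
    ⟨fun y => a⁻¹ * y, ‖a⁻¹‖₊, fun y => by simp, fun y => by simp [L, mul_inv_cancel_left₀ ha]⟩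
    hρ subset_rfl
  have hradius : (((‖a⁻¹‖₊ : ℝ≥0) : ℝ)⁻¹ - (‖a‖ / 4).toNNReal) * ρ = 3 / 4 * ‖a‖ * ρ := by
    rw [coe_nnnorm, norm_inv, inv_inv, Real.coe_toNNReal _ (by positivity)]
    ring
  rwa [hradius] at hsurj

lemma closedBall_subset_image_of_norm_deriv_bounds {c : ℂ} {R a b : ℝ} (hR : 0 < R) (ha : 0 < a)
    (hf : DifferentiableOn ℂ f (ball c R)) (hac : a ≤ ‖deriv f c‖)
    (hb : ∀ w ∈ ball c R, ‖deriv f w‖ ≤ b) :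
    closedBall (f c) (3 * a ^ 2 * R / (32 * b)) ⊆ f '' closedBall c (a * R / (8 * b)) := by
  have hab : a ≤ b := hac.trans (hb c (mem_ball_self hR))
  have hb0 : 0 < b := ha.trans_le hab
  have hsub : closedBall c (a * R / (8 * b)) ⊆ ball c R := by
    refine closedBall_subset_ball ?_
    rw [div_lt_iff₀ (by positivity)]
    nlinarith
  have hosc : ∀ w ∈ closedBall c (a * R / (8 * b)),
      ‖deriv f w - deriv f c‖ ≤ ‖deriv f c‖ / 4 := by
    intro w hw
    rw [← dist_eq_norm]
    calc dist (deriv f w) (deriv f c) ≤ 2 * b / R * dist w c :=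
          dist_deriv_le_of_norm_deriv_le hf hb (hsub hw)
      _ ≤ 2 * b / R * (a * R / (8 * b)) := by gcongr; exact mem_closedBall.1 hw
      _ = a / 4 := by field_simp; ring
      _ ≤ ‖deriv f c‖ / 4 := by gcongr
  refine (closedBall_subset_closedBall ?_).trans
    (closedBall_subset_image_of_norm_deriv_sub_le (by positivity)
      (norm_pos_iff.1 (ha.trans_le hac))
      (fun w hw => hf.differentiableAt (isOpen_ball.mem_nhds (hsub hw))) hosc)
  calc 3 * a ^ 2 * R / (32 * b) = 3 / 4 * a * (a * R / (8 * b)) := by field_simp; ring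
    _ ≤ 3 / 4 * ‖deriv f c‖ * (a * R / (8 * b)) := by gcongr

lemma card_mul_sq_le_of_injOn {U : Set ℂ} (hf : DifferentiableOn ℂ f U)
    (hinj : InjOn f U) {a b R : ℝ} (ha : 0 < a) (hR : 0 < R)
    (hder : ∀ z ∈ U, a ≤ ‖deriv f z‖ ∧ ‖deriv f z‖ ≤ b) {ι : Type*} {t : Finset ι} {c : ι → ℂ}
    (hball : ∀ i ∈ t, ball (c i) R ⊆ U)
    (hdisj : (t : Set ι).PairwiseDisjoint fun i => ball (c i) R) {w : ℂ} {D : ℝ}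
    (hcenter : ∀ i ∈ t, dist (f (c i)) w ≤ D) :
    t.card * (3 * a ^ 2 * R / (32 * b)) ^ 2 ≤ (D + 3 * a ^ 2 * R / (32 * b)) ^ 2 := by
  rcases t.eq_empty_or_nonempty with rfl | ⟨i₀, hi₀⟩
  · simpa using sq_nonneg _
  have hb : 0 < b := ha.trans_le ((hder _ (hball i₀ hi₀ (mem_ball_self hR))).1.trans
    (hder _ (hball i₀ hi₀ (mem_ball_self hR))).2)
  set r := 3 * a ^ 2 * R / (32 * b)
  have hr : 0 < r := by positivity
  have hdisc : ∀ i ∈ t, closedBall (f (c i)) r ⊆ f '' ball (c i) R := fun i hi =>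
    (closedBall_subset_image_of_norm_deriv_bounds hR ha ((hf.mono (hball i hi)))
      (hder _ (hball i hi (mem_ball_self hR))).1
      (fun z hz => (hder z (hball i hi hz)).2)).trans
    (image_mono (closedBall_subset_ball (by
      rw [div_lt_iff₀ (by positivity)]
      nlinarith [(hder _ (hball i hi (mem_ball_self hR))).1,
        (hder _ (hball i hi (mem_ball_self hR))).2])))
  have := card_mul_pow_le_of_pairwiseDisjoint_closedBall (t := t) (c := fun i => f (c i))
    (w := w) (R := D + r) hr
    (by linarith [dist_nonneg.trans (hcenter i₀ hi₀)])
    (fun i hi j hj hij => ((hdisj hi hj hij).image hinj (hball i hi) (hball j hj)).mono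
      (hdisc i hi) (hdisc j hj))
    (fun i hi => closedBall_subset_closedBall' (by linarith [hcenter i hi]))
  simpa using this

end ImageDiscs

open Complex

/-- For closed `E` the sawtooth region is the union of these truncated cones over `ξ ∈ E`,
and each of them is convex. -/
def sawtoothCone (x₀ y₀ ξ : ℝ) : Set ℂ :=
  {z : ℂ | z.re ∈ Ioo (x₀ - y₀ / 2) (x₀ + y₀ / 2) ∧ 0 < z.im ∧ |z.re - ξ| ≤ z.im ∧ z.im < y₀}

section SawtoothCone

variable {E : Set ℝ} {x₀ y₀ ξ : ℝ}

lemma convex_sawtoothCone : Convex ℝ (sawtoothCone x₀ y₀ ξ) := by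
  refine convex_iff_forall_pos.2 fun z ⟨⟨hz₁, hz₂⟩, hz₃, hz₄, hz₅⟩ w ⟨⟨hw₁, hw₂⟩, hw₃, hw₄, hw₅⟩
    s t hs ht hst => ?_
  have hconv (c : ℝ) : s * c + t * c = c := by rw [← add_mul, hst, one_mul]
  have hre : (s • z + t • w).re = s * z.re + t * w.re := by simp
  have him : (s • z + t • w).im = s * z.im + t * w.im := by simp
  rw [abs_le] at hz₄ hw₄
  refine ⟨⟨?_, ?_⟩, ?_, abs_le.2 ⟨?_, ?_⟩, ?_⟩ <;> simp only [hre, him]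
  · linarith [mul_lt_mul_of_pos_left hz₁ hs, mul_lt_mul_of_pos_left hw₁ ht, hconv x₀, hconv y₀]
  · linarith [mul_lt_mul_of_pos_left hz₂ hs, mul_lt_mul_of_pos_left hw₂ ht, hconv x₀, hconv y₀]
  · positivity
  · linarith [mul_le_mul_of_nonneg_left hz₄.1 hs.le, mul_le_mul_of_nonneg_left hw₄.1 ht.le, hconv ξ]
  · linarith [mul_le_mul_of_nonneg_left hz₄.2 hs.le, mul_le_mul_of_nonneg_left hw₄.2 ht.le, hconv ξ]
  · linarith [mul_lt_mul_of_pos_left hz₅ hs, mul_lt_mul_of_pos_left hw₅ ht, hconv y₀]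

lemma sawtoothCone_subset_sawtooth (hξ : ξ ∈ E) : sawtoothCone x₀ y₀ ξ ⊆ Sawtooth E x₀ y₀ :=
  fun _ ⟨hre, him, hcone, hy₀⟩ =>
    ⟨hre, him, (infDist_le_dist_of_mem hξ).trans (by rwa [Real.dist_eq]), hy₀⟩

lemma exists_mem_sawtoothCone (hE : IsClosed E) (hne : E.Nonempty) {z : ℂ}
    (hz : z ∈ Sawtooth E x₀ y₀) : ∃ ξ ∈ E, z ∈ sawtoothCone x₀ y₀ ξ := by
  obtain ⟨ξ, hξ, hdist⟩ := hE.exists_infDist_eq_dist hne z.re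
  exact ⟨ξ, hξ, hz.1, hz.2.1, by rw [← Real.dist_eq, ← hdist]; exact hz.2.2.1, hz.2.2.2⟩

lemma ofReal_add_mul_I_mem_sawtoothCone {x t : ℝ} (hx : x ∈ Ioo (x₀ - y₀ / 2) (x₀ + y₀ / 2))
    (hxξ : |x - ξ| ≤ t) (ht : 0 < t) (hty : t < y₀) : (x + t * I : ℂ) ∈ sawtoothCone x₀ y₀ ξ := by
  refine ⟨?_, ?_, ?_, ?_⟩ <;> simpa

lemma ball_subset_sawtoothCone {p ℓ : ℝ} (hℓ : 0 < ℓ)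
    (hp : p ∈ Ioo (x₀ - y₀ / 2 + ℓ / 2) (x₀ + y₀ / 2 - ℓ / 2)) :
    ball (p + (ℓ / 2 : ℝ) * I) (ℓ / 4) ⊆ sawtoothCone x₀ y₀ p := by
  intro w hw
  rw [mem_ball, dist_eq_norm] at hw
  have hre := (abs_re_le_norm _).trans_lt hw
  have him := (abs_im_le_norm _).trans_lt hw
  simp only [sub_re, add_re, ofReal_re, mul_re, I_re, mul_zero, ofReal_im, I_im, mul_one,
    sub_self, add_zero, sub_im, add_im, mul_im, zero_add] at hre him
  rw [abs_lt] at hre him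
  obtain ⟨hp₁, hp₂⟩ := hp
  exact ⟨⟨by linarith, by linarith⟩, by linarith, abs_le.2 ⟨by linarith, by linarith⟩,
    by linarith⟩

end SawtoothCone

def verticalLimit (f : ℂ → ℂ) (z : ℂ) : ℂ :=
  limUnder (𝓝[>] (0 : ℝ)) fun t : ℝ => f (z + t * I)

lemma verticalLimit_eq_of_continuousAt {f : ℂ → ℂ} {z : ℂ} (hf : ContinuousAt f z) :
    verticalLimit f z = f z := by
  refine Tendsto.limUnder_eq (hf.tendsto.comp ?_)
  have : Tendsto (fun t : ℝ => z + t * I) (𝓝 0) (𝓝 z) := by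
    simpa using ((continuous_ofReal.mul continuous_const).const_add z).tendsto 0
  exact this.mono_left nhdsWithin_le_nhds

section BoundaryExtension

variable {f : ℂ → ℂ} {E : Set ℝ} {x₀ y₀ b ξ η : ℝ}

lemma norm_sub_le_of_mem_sawtoothCone (hf : ∀ z ∈ Sawtooth E x₀ y₀, DifferentiableAt ℂ f z)
    (hb : ∀ z ∈ Sawtooth E x₀ y₀, ‖deriv f z‖ ≤ b) (hξ : ξ ∈ E) {z w : ℂ}
    (hz : z ∈ sawtoothCone x₀ y₀ ξ) (hw : w ∈ sawtoothCone x₀ y₀ ξ) :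
    ‖f z - f w‖ ≤ b * ‖z - w‖ :=
  convex_sawtoothCone.norm_image_sub_le_of_norm_deriv_le
    (fun v hv => hf v (sawtoothCone_subset_sawtooth hξ hv))
    (fun v hv => hb v (sawtoothCone_subset_sawtooth hξ hv)) hw hz

lemma norm_sub_le_of_vertical (hf : ∀ z ∈ Sawtooth E x₀ y₀, DifferentiableAt ℂ f z)
    (hb : ∀ z ∈ Sawtooth E x₀ y₀, ‖deriv f z‖ ≤ b) (hE : E ⊆ Ioo (x₀ - y₀ / 2) (x₀ + y₀ / 2))
    (hξ : ξ ∈ E) {s t : ℝ} (hs : s ∈ Ioo 0 y₀) (ht : t ∈ Ioo 0 y₀) :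
    ‖f (ξ + s * I) - f (ξ + t * I)‖ ≤ b * |s - t| := by
  have hmem {u : ℝ} (hu : u ∈ Ioo 0 y₀) : (ξ + u * I : ℂ) ∈ sawtoothCone x₀ y₀ ξ :=
    ofReal_add_mul_I_mem_sawtoothCone (hE hξ) (by simpa using hu.1.le) hu.1 hu.2
  convert norm_sub_le_of_mem_sawtoothCone hf hb hξ (hmem hs) (hmem ht) using 2
  rw [add_sub_add_left_eq_sub, ← sub_mul, norm_mul, norm_I, mul_one, ← ofReal_sub, norm_real,
    Real.norm_eq_abs]

lemma tendsto_verticalLimit (hf : ∀ z ∈ Sawtooth E x₀ y₀, DifferentiableAt ℂ f z)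
    (hb : ∀ z ∈ Sawtooth E x₀ y₀, ‖deriv f z‖ ≤ b) (hE : E ⊆ Ioo (x₀ - y₀ / 2) (x₀ + y₀ / 2))
    (hξ : ξ ∈ E) :
    Tendsto (fun t : ℝ => f (ξ + t * I)) (𝓝[>] 0) (𝓝 (verticalLimit f ξ)) := by
  have hy₀ : 0 < y₀ := by linarith [(hE hξ).1, (hE hξ).2]
  have hlip : LipschitzOnWith b.toNNReal (fun t : ℝ => f (ξ + t * I)) (Ioo 0 y₀) :=
    LipschitzOnWith.of_dist_le' fun s hs t ht => by
      simpa [dist_eq_norm, Real.dist_eq] using norm_sub_le_of_vertical hf hb hE hξ hs ht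
  have hcauchy : Cauchy (𝓝[Ioo 0 y₀] (0 : ℝ)) := by
    rw [nhdsWithin_Ioo_eq_nhdsGT hy₀]
    exact cauchy_nhds.mono nhdsWithin_le_nhds
  replace hcauchy := hcauchy.map_of_le hlip.uniformContinuousOn inf_le_right
  rw [nhdsWithin_Ioo_eq_nhdsGT hy₀] at hcauchy
  obtain ⟨L, hL⟩ := CompleteSpace.complete hcauchy
  exact tendsto_nhds_limUnder ⟨L, hL⟩

lemma norm_verticalLimit_sub_le (hf : ∀ z ∈ Sawtooth E x₀ y₀, DifferentiableAt ℂ f z)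
    (hb : ∀ z ∈ Sawtooth E x₀ y₀, ‖deriv f z‖ ≤ b) (hE : E ⊆ Ioo (x₀ - y₀ / 2) (x₀ + y₀ / 2))
    (hξ : ξ ∈ E) {t : ℝ} (ht : t ∈ Ioo 0 y₀) :
    ‖verticalLimit f ξ - f (ξ + t * I)‖ ≤ b * t := by
  have hlim : Tendsto (fun s : ℝ => ‖f (ξ + s * I) - f (ξ + t * I)‖) (𝓝[>] 0)
      (𝓝 ‖verticalLimit f ξ - f (ξ + t * I)‖) :=
    ((tendsto_verticalLimit hf hb hE hξ).sub_const _).norm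
  have hb0 : 0 ≤ b := (norm_nonneg _).trans (hb _ (sawtoothCone_subset_sawtooth hξ
    (ofReal_add_mul_I_mem_sawtoothCone (hE hξ) (by simpa using ht.1.le) ht.1 ht.2)))
  refine le_of_tendsto hlim ?_
  filter_upwards [Ioo_mem_nhdsGT ht.1] with s hs
  calc ‖f (ξ + s * I) - f (ξ + t * I)‖ ≤ b * |s - t| :=
        norm_sub_le_of_vertical hf hb hE hξ ⟨hs.1, hs.2.trans ht.2⟩ ht
    _ ≤ b * t := by
        gcongr
        rw [abs_sub_comm, abs_of_pos (by linarith [hs.2])]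
        linarith [hs.1]

lemma norm_sub_verticalLimit_le_of_mem_sawtoothCone
    (hf : ∀ z ∈ Sawtooth E x₀ y₀, DifferentiableAt ℂ f z)
    (hb : ∀ z ∈ Sawtooth E x₀ y₀, ‖deriv f z‖ ≤ b) (hE : E ⊆ Ioo (x₀ - y₀ / 2) (x₀ + y₀ / 2))
    (hξ : ξ ∈ E) {z : ℂ} (hz : z ∈ sawtoothCone x₀ y₀ ξ) :
    ‖f z - verticalLimit f ξ‖ ≤ 2 * b * ‖z - ξ‖ := by
  have hb0 : 0 ≤ b := (norm_nonneg _).trans (hb z (sawtoothCone_subset_sawtooth hξ hz))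
  have hw : (ξ + z.im * I : ℂ) ∈ sawtoothCone x₀ y₀ ξ :=
    ofReal_add_mul_I_mem_sawtoothCone (hE hξ) (by simpa using hz.2.1.le) hz.2.1 hz.2.2.2
  have hzw : z - (ξ + z.im * I) = ((z - ξ).re : ℂ) := by
    apply Complex.ext <;> simp
  have him : z.im = (z - ξ).im := by simp
  calc ‖f z - verticalLimit f ξ‖
      ≤ ‖f z - f (ξ + z.im * I)‖ + ‖verticalLimit f ξ - f (ξ + z.im * I)‖ := by
        rw [norm_sub_rev (verticalLimit f ξ)]; exact norm_sub_le_norm_sub_add_norm_sub _ _ _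
    _ ≤ b * |(z - ξ).re| + b * |(z - ξ).im| := by
        gcongr
        · have := norm_sub_le_of_mem_sawtoothCone hf hb hξ hz hw
          rwa [hzw, norm_real, Real.norm_eq_abs] at this
        · rw [← him, abs_of_pos hz.2.1]
          exact norm_verticalLimit_sub_le hf hb hE hξ ⟨hz.2.1, hz.2.2.2⟩
    _ ≤ 2 * b * ‖z - ξ‖ := by
        nlinarith [abs_re_le_norm (z - ξ), abs_im_le_norm (z - ξ)]

lemma norm_verticalLimit_sub_verticalLimit_le
    (hf : ∀ z ∈ Sawtooth E x₀ y₀, DifferentiableAt ℂ f z)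
    (hb : ∀ z ∈ Sawtooth E x₀ y₀, ‖deriv f z‖ ≤ b) (hE : E ⊆ Ioo (x₀ - y₀ / 2) (x₀ + y₀ / 2))
    (hξ : ξ ∈ E) (hη : η ∈ E) :
    ‖verticalLimit f η - verticalLimit f ξ‖ ≤ 6 * b * |η - ξ| := by
  rcases eq_or_ne η ξ with rfl | hne
  · simp
  set d := |η - ξ|
  have hd : 0 < d := abs_pos.2 (sub_ne_zero.2 hne)
  have hdy : d < y₀ := by
    obtain ⟨⟨h₁, h₂⟩, h₃, h₄⟩ := And.intro (hE hξ) (hE hη)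
    exact abs_sub_lt_iff.2 ⟨by linarith, by linarith⟩
  have hzξ : (η + d * I : ℂ) ∈ sawtoothCone x₀ y₀ ξ :=
    ofReal_add_mul_I_mem_sawtoothCone (hE hη) le_rfl hd hdy
  have hzη : (η + d * I : ℂ) ∈ sawtoothCone x₀ y₀ η :=
    ofReal_add_mul_I_mem_sawtoothCone (hE hη) (by simpa using hd.le) hd hdy
  have hdist : ‖(η + d * I : ℂ) - (ξ : ℂ)‖ ≤ 2 * d := by
    refine (norm_le_abs_re_add_abs_im _).trans ?_
    simp [d, abs_of_pos hd, two_mul]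
  calc ‖verticalLimit f η - verticalLimit f ξ‖
      ≤ ‖f (η + d * I) - verticalLimit f η‖ + ‖f (η + d * I) - verticalLimit f ξ‖ := by
        rw [norm_sub_rev (f _) (verticalLimit f η)]; exact norm_sub_le_norm_sub_add_norm_sub _ _ _
    _ ≤ 2 * b * ‖(η + d * I : ℂ) - (η : ℂ)‖ + 2 * b * ‖(η + d * I : ℂ) - (ξ : ℂ)‖ :=
        add_le_add (norm_sub_verticalLimit_le_of_mem_sawtoothCone hf hb hE hη hzη)
          (norm_sub_verticalLimit_le_of_mem_sawtoothCone hf hb hE hξ hzξ)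
    _ ≤ 2 * b * d + 2 * b * (2 * d) := by
        have hb0 : 0 ≤ 2 * b := mul_nonneg zero_le_two
          ((norm_nonneg _).trans (hb _ (sawtoothCone_subset_sawtooth hξ hzξ)))
        exact add_le_add (mul_le_mul_of_nonneg_left (by simp [abs_of_pos hd]) hb0)
          (mul_le_mul_of_nonneg_left hdist hb0)
    _ = 6 * b * d := by ring

lemma norm_verticalLimit_sub_le_of_mem (hf : ∀ z ∈ Sawtooth E x₀ y₀, DifferentiableAt ℂ f z)
    (hb : ∀ z ∈ Sawtooth E x₀ y₀, ‖deriv f z‖ ≤ b) (hE : E ⊆ Ioo (x₀ - y₀ / 2) (x₀ + y₀ / 2))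
    (hEc : IsClosed E) (hξ : ξ ∈ E) {w : ℂ}
    (hw : w ∈ Sawtooth E x₀ y₀ ∪ ((fun x : ℝ => (x : ℂ)) '' E)) :
    ‖verticalLimit f w - verticalLimit f ξ‖ ≤ 22 * b * ‖w - ξ‖ := by
  rcases hw with hw | ⟨η, hη, rfl⟩
  · have hb0 : 0 ≤ b := (norm_nonneg _).trans (hb w hw)
    obtain ⟨η, hη, hwη⟩ := exists_mem_sawtoothCone hEc ⟨ξ, hξ⟩ hw
    have hwη_dist : ‖w - η‖ ≤ 2 * ‖w - ξ‖ := by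
      refine (norm_le_abs_re_add_abs_im _).trans ?_
      have := (abs_im_le_norm (w - ξ)).trans' (le_abs_self _)
      simp only [sub_re, sub_im, ofReal_re, ofReal_im, sub_zero, abs_of_pos hwη.2.1] at this ⊢
      linarith [hwη.2.2.1]
    have hηξ : |η - ξ| ≤ 3 * ‖w - ξ‖ := by
      rw [← Real.norm_eq_abs, ← norm_real, ofReal_sub]
      calc ‖(η : ℂ) - ξ‖ ≤ ‖w - η‖ + ‖w - ξ‖ := by
            rw [norm_sub_rev w]; exact norm_sub_le_norm_sub_add_norm_sub _ _ _
        _ ≤ 3 * ‖w - ξ‖ := by linarith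
    rw [verticalLimit_eq_of_continuousAt (hf w hw).continuousAt]
    calc ‖f w - verticalLimit f ξ‖
        ≤ ‖f w - verticalLimit f η‖ + ‖verticalLimit f η - verticalLimit f ξ‖ :=
          norm_sub_le_norm_sub_add_norm_sub _ _ _
      _ ≤ 2 * b * ‖w - η‖ + 6 * b * |η - ξ| :=
          add_le_add (norm_sub_verticalLimit_le_of_mem_sawtoothCone hf hb hE hη hwη)
            (norm_verticalLimit_sub_verticalLimit_le hf hb hE hξ hη)
      _ ≤ 22 * b * ‖w - ξ‖ := by nlinarith
  · have h := norm_verticalLimit_sub_verticalLimit_le hf hb hE hξ hη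
    rw [← ofReal_sub, norm_real, Real.norm_eq_abs]
    linarith [norm_nonneg (verticalLimit f η - verticalLimit f ξ)]

lemma continuousOn_verticalLimit (hf : ∀ z ∈ Sawtooth E x₀ y₀, DifferentiableAt ℂ f z)
    (hb : ∀ z ∈ Sawtooth E x₀ y₀, ‖deriv f z‖ ≤ b) (hE : E ⊆ Ioo (x₀ - y₀ / 2) (x₀ + y₀ / 2))
    (hEc : IsClosed E) :
    ContinuousOn (verticalLimit f) (Sawtooth E x₀ y₀ ∪ ((fun x : ℝ => (x : ℂ)) '' E)) := by
  intro w hw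
  rcases hw with hwS | ⟨ξ, hξ, rfl⟩
  · have hfw := (hf w hwS).continuousAt
    refine hfw.continuousWithinAt.congr_of_eventuallyEq ?_
      (verticalLimit_eq_of_continuousAt hfw)
    filter_upwards [self_mem_nhdsWithin, mem_nhdsWithin_of_mem_nhds
      ((isOpen_lt continuous_const continuous_im).mem_nhds hwS.2.1)] with z hz hzim
    rcases hz with hzS | ⟨x, -, rfl⟩
    · exact verticalLimit_eq_of_continuousAt (hf z hzS).continuousAt
    · simp at hzim
  · refine tendsto_iff_norm_sub_tendsto_zero.2 (squeeze_zero' (Eventually.of_forall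
      fun _ => norm_nonneg _) (eventually_nhdsWithin_of_forall fun w hw =>
        norm_verticalLimit_sub_le_of_mem hf hb hE hEc hξ hw) ?_)
    have : Tendsto (fun w : ℂ => 22 * b * ‖w - ξ‖) (𝓝 ξ) (𝓝 (22 * b * ‖(ξ : ℂ) - ξ‖)) :=
      ((continuous_id.sub continuous_const).norm.const_mul _).tendsto _
    simpa using this.mono_left nhdsWithin_le_nhds

end BoundaryExtension

/-- Here `k` stands for the distortion `b / a`; the square comes from the area count of image
discs, the `+ 2` from the separated points near the two ends of the interval. -/
def sawtoothPackingBound (k : ℝ) : ℕ := ⌈(64 * k ^ 2 / 3 + 2) ^ 2⌉₊ + 2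

section SawtoothPacking

variable {f : ℂ → ℂ} {E : Set ℝ} {x₀ y₀ a b ρ ℓ : ℝ} {F : Set ℂ} {t : Finset ℝ}

lemma dist_add_mul_I_add_mul_I (p q s : ℝ) :
    dist ((p : ℂ) + s * I) ((q : ℂ) + s * I) = dist p q := by
  rw [dist_eq_norm, add_sub_add_right_eq_sub, ← ofReal_sub, norm_real, Real.dist_eq,
    Real.norm_eq_abs]

lemma card_le_of_forall_mem_Ioo (hf : ∀ z ∈ Sawtooth E x₀ y₀, DifferentiableAt ℂ f z)
    (hinj : InjOn f (Sawtooth E x₀ y₀)) (ha : 0 < a)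
    (hder : ∀ z ∈ Sawtooth E x₀ y₀, a ≤ ‖deriv f z‖ ∧ ‖deriv f z‖ ≤ b)
    (hE : E ⊆ Ioo (x₀ - y₀ / 2) (x₀ + y₀ / 2)) (hℓ : 0 < ℓ)
    (hρℓ : 128 * b / (3 * a ^ 2) * ρ < ℓ) (hF : ∀ y ∈ F, ∀ y' ∈ F, dist y y' ≤ ρ)
    (htE : ↑t ⊆ E) (htF : ∀ p ∈ t, verticalLimit f p ∈ F)
    (hsep : (t : Set ℝ).Pairwise fun p q => ℓ < dist p q)
    (htI : ∀ p ∈ t, p ∈ Ioo (x₀ - y₀ / 2 + ℓ / 2) (x₀ + y₀ / 2 - ℓ / 2)) :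
    (t.card : ℝ) ≤ (64 * (b / a) ^ 2 / 3 + 2) ^ 2 := by
  rcases t.eq_empty_or_nonempty with rfl | ⟨p₀, hp₀⟩
  · simp only [Finset.card_empty, Nat.cast_zero]; positivity
  set c : ℝ → ℂ := fun p => p + (ℓ / 2 : ℝ) * I
  have hball : ∀ p ∈ t, ball (c p) (ℓ / 4) ⊆ Sawtooth E x₀ y₀ := fun p hp =>
    (ball_subset_sawtoothCone hℓ (htI p hp)).trans (sawtoothCone_subset_sawtooth (htE hp))
  have hb : 0 < b := ha.trans_le ((hder _ (hball p₀ hp₀ (mem_ball_self (by positivity)))).1.trans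
    (hder _ (hball p₀ hp₀ (mem_ball_self (by positivity)))).2)
  have hdisj : (t : Set ℝ).PairwiseDisjoint fun p => ball (c p) (ℓ / 4) := fun p hp q hq hpq =>
    ball_disjoint_ball (by rw [dist_add_mul_I_add_mul_I]; linarith [hsep hp hq hpq])
  have hcenter : ∀ p ∈ t, dist (f (c p)) (verticalLimit f p₀) ≤ b * (ℓ / 2) + ρ := by
    intro p hp
    have hℓy₀ : ℓ / 2 < y₀ := by linarith [(htI p hp).1, (htI p hp).2]
    refine (dist_triangle _ (verticalLimit f p) _).trans (add_le_add ?_ (hF _ (htF p hp) _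
      (htF p₀ hp₀)))
    rw [dist_comm, dist_eq_norm]
    exact norm_verticalLimit_sub_le hf (fun z hz => (hder z hz).2) hE (htE hp)
      ⟨by positivity, hℓy₀⟩
  have key := card_mul_sq_le_of_injOn (fun z hz => (hf z hz).differentiableWithinAt) hinj ha
    (by positivity) hder hball hdisj hcenter
  set r := 3 * a ^ 2 * (ℓ / 4) / (32 * b)
  have hr : 0 < r := by positivity
  have hρr : ρ ≤ r := by
    rw [div_mul_eq_mul_div, div_lt_iff₀ (by positivity)] at hρℓ
    rw [le_div_iff₀ (by positivity)]
    linarith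
  have hbℓ : b * (ℓ / 2) = 64 * (b / a) ^ 2 / 3 * r := by
    simp only [r]
    field_simp
    ring
  have hsq : (b * (ℓ / 2) + ρ + r) ^ 2 ≤ ((64 * (b / a) ^ 2 / 3 + 2) * r) ^ 2 := by
    gcongr
    · linarith [dist_nonneg.trans (hcenter p₀ hp₀)]
    · linarith
  refine le_of_mul_le_mul_right ?_ (pow_pos hr 2)
  linarith

lemma card_le_sawtoothPackingBound (hf : ∀ z ∈ Sawtooth E x₀ y₀, DifferentiableAt ℂ f z)
    (hinj : InjOn f (Sawtooth E x₀ y₀)) (ha : 0 < a)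
    (hder : ∀ z ∈ Sawtooth E x₀ y₀, a ≤ ‖deriv f z‖ ∧ ‖deriv f z‖ ≤ b)
    (hE : E ⊆ Ioo (x₀ - y₀ / 2) (x₀ + y₀ / 2)) (hℓ : 0 < ℓ)
    (hρℓ : 128 * b / (3 * a ^ 2) * ρ < ℓ) (hF : ∀ y ∈ F, ∀ y' ∈ F, dist y y' ≤ ρ)
    (htE : ↑t ⊆ E) (htF : ∀ p ∈ t, verticalLimit f p ∈ F)
    (hsep : (t : Set ℝ).Pairwise fun p q => ℓ < dist p q) :
    t.card ≤ sawtoothPackingBound (b / a) := by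
  classical
  set tL := t.filter (· ≤ x₀ - y₀ / 2 + ℓ / 2)
  set tR := t.filter (x₀ + y₀ / 2 - ℓ / 2 ≤ ·)
  set tG := t.filter (· ∈ Ioo (x₀ - y₀ / 2 + ℓ / 2) (x₀ + y₀ / 2 - ℓ / 2))
  have hsplit : t ⊆ tL ∪ tR ∪ tG := by
    intro p hp
    simp only [tL, tR, tG, Finset.mem_union, Finset.mem_filter, mem_Ioo, hp, true_and]
    rcases le_or_gt p (x₀ - y₀ / 2 + ℓ / 2) with h₁ | h₁ <;>
      rcases le_or_gt (x₀ + y₀ / 2 - ℓ / 2) p with h₂ | h₂ <;> tauto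
  have hsub {s : Finset ℝ} (hs : s ⊆ t) : (s : Set ℝ).Pairwise fun p q => ℓ < dist p q :=
    hsep.mono (Finset.coe_subset.2 hs)
  have hL : tL.card ≤ 1 := by
    refine card_le_one_of_pairwise_lt_dist (hsub (Finset.filter_subset _ _)) fun p hp q hq => ?_
    simp only [tL, Finset.mem_filter] at hp hq
    rw [Real.dist_eq, abs_le]
    constructor <;> linarith [(hE (htE hp.1)).1, (hE (htE hq.1)).1]
  have hR : tR.card ≤ 1 := by
    refine card_le_one_of_pairwise_lt_dist (hsub (Finset.filter_subset _ _)) fun p hp q hq => ?_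
    simp only [tR, Finset.mem_filter] at hp hq
    rw [Real.dist_eq, abs_le]
    constructor <;> linarith [(hE (htE hp.1)).2, (hE (htE hq.1)).2]
  have hG : tG.card ≤ ⌈(64 * (b / a) ^ 2 / 3 + 2) ^ 2⌉₊ := by
    have hGt : tG ⊆ t := Finset.filter_subset _ _
    exact_mod_cast (card_le_of_forall_mem_Ioo hf hinj ha hder hE hℓ hρℓ hF
      ((Finset.coe_subset.2 hGt).trans htE) (fun p hp => htF p (hGt hp)) (hsub hGt)
      fun p hp => (Finset.mem_filter.1 hp).2).trans (Nat.le_ceil _)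
  calc t.card ≤ (tL ∪ tR ∪ tG).card := Finset.card_le_card hsplit
    _ ≤ tL.card + tR.card + tG.card :=
        (Finset.card_union_le _ _).trans (by gcongr; exact Finset.card_union_le _ _)
    _ ≤ sawtoothPackingBound (b / a) := by unfold sawtoothPackingBound; omega

lemma ofReal_mul_hContent_le_hContent_verticalLimit_image {α : ℝ} (hα : 0 < α)
    (hf : ∀ z ∈ Sawtooth E x₀ y₀, DifferentiableAt ℂ f z)
    (hinj : InjOn f (Sawtooth E x₀ y₀)) (ha : 0 < a)
    (hder : ∀ z ∈ Sawtooth E x₀ y₀, a ≤ ‖deriv f z‖ ∧ ‖deriv f z‖ ≤ b)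
    (hE : E ⊆ Ioo (x₀ - y₀ / 2) (x₀ + y₀ / 2)) :
    ENNReal.ofReal (sawtoothPackingBound (b / a) * (2 * (128 * b / (3 * a ^ 2))) ^ α)⁻¹ *
      hContent α E ≤ hContent α ((fun x : ℝ => verticalLimit f x) '' E) := by
  rcases E.eq_empty_or_nonempty with rfl | ⟨ξ, hξ⟩
  · simp [hContent_eq_ofFunction hα]
  have hy₀ : 0 < y₀ := by linarith [(hE hξ).1, (hE hξ).2]
  have hz := sawtoothCone_subset_sawtooth hξ (ofReal_add_mul_I_mem_sawtoothCone (hE hξ)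
    (by simpa using (half_pos hy₀).le) (half_pos hy₀) (half_lt_self hy₀))
  have hb : 0 < b := ha.trans_le ((hder _ hz).1.trans (hder _ hz).2)
  exact ofReal_mul_hContent_le_hContent_image hα (by positivity)
    fun F ρ ℓ hℓ hρℓ hF t htE htF hsep =>
      card_le_sawtoothPackingBound hf hinj ha hder hE hℓ hρℓ hF htE htF hsep

end SawtoothPacking

theorem image_content_lower_bound_general (α : ℝ) (hα0 : 0 < α)
    (C : ℝ) (hC : 1 ≤ C) :
    ∃ c : ℝ, 0 < c ∧
      ∀ f : ℂ → ℂ, DifferentiableOn ℂ f UHP → Set.InjOn f UHP →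
        ∀ z₀ ∈ UHP, ∀ E : Set ℝ, E.Nonempty → IsCompact E →
          E ⊆ Set.Ioo (z₀.re - z₀.im / 2) (z₀.re + z₀.im / 2) →
          (∀ w ∈ Sawtooth E z₀.re z₀.im,
            ‖deriv f z₀‖ / C ≤ ‖deriv f w‖ ∧ ‖deriv f w‖ ≤ C * ‖deriv f z₀‖) →
          ∃ g : ℂ → ℂ,
            ContinuousOn g (Sawtooth E z₀.re z₀.im ∪ ((fun x : ℝ => (x : ℂ)) '' E)) ∧
            Set.EqOn g f (Sawtooth E z₀.re z₀.im) ∧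
            ENNReal.ofReal (c * ‖deriv f z₀‖ ^ α) * hContent α E ≤
              hContent α (g '' ((fun x : ℝ => (x : ℂ)) '' E)) := by
  have hC0 : 0 < C := one_pos.trans_le hC
  have hN : (0 : ℝ) < sawtoothPackingBound (C ^ 2) := by
    unfold sawtoothPackingBound; positivity
  refine ⟨(sawtoothPackingBound (C ^ 2) * (2 * (128 * C ^ 3 / 3)) ^ α)⁻¹, by positivity, ?_⟩
  intro f hf hinj z₀ _ E _ hEc hE hder
  have hfS : ∀ z ∈ Sawtooth E z₀.re z₀.im, DifferentiableAt ℂ f z := fun z hz =>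
    hf.differentiableAt ((isOpen_lt continuous_const continuous_im).mem_nhds hz.2.1)
  refine ⟨verticalLimit f, continuousOn_verticalLimit hfS (fun z hz => (hder z hz).2) hE
    hEc.isClosed, fun z hz => verticalLimit_eq_of_continuousAt (hfS z hz).continuousAt, ?_⟩
  have hm0 := norm_nonneg (deriv f z₀)
  generalize ‖deriv f z₀‖ = m at hm0 hder ⊢
  rcases hm0.eq_or_lt with rfl | hm
  · simp [Real.zero_rpow hα0.ne']
  have hbound := ofReal_mul_hContent_le_hContent_verticalLimit_image hα0 hfS
    (hinj.mono fun z hz => hz.2.1) (div_pos hm hC0) hder hE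
  have hk : C * m / (m / C) = C ^ 2 := by field_simp
  have hκ : 2 * (128 * (C * m) / (3 * (m / C) ^ 2)) = 2 * (128 * C ^ 3 / 3) / m := by
    field_simp
  rw [image_image]
  convert hbound using 3
  rw [hk, hκ, Real.div_rpow (by positivity) hm.le]
  field_simp

/-- under the sawtooth distortion hypothesis, `f` extends continuously to
`S(E) ∪ E` and the Hausdorff content of the image of `E` satisfies
`H^α_∞(f(E)) ≥ c(α) |f'(z₀)|^α H^α_∞(E)`. -/
theorem image_content_lower_bound (α : ℝ) (hα0 : 0 < α) (hα1 : α < 1)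
    (C : ℝ) (hC : 1 ≤ C) :
    ∃ c : ℝ, 0 < c ∧
      ∀ f : ℂ → ℂ, DifferentiableOn ℂ f UHP → Set.InjOn f UHP →
        ∀ z₀ ∈ UHP, ∀ E : Set ℝ, E.Nonempty → IsCompact E →
          E ⊆ Set.Ioo (z₀.re - z₀.im / 2) (z₀.re + z₀.im / 2) →
          (∀ w ∈ Sawtooth E z₀.re z₀.im,
            ‖deriv f z₀‖ / C ≤ ‖deriv f w‖ ∧ ‖deriv f w‖ ≤ C * ‖deriv f z₀‖) →
          ∃ g : ℂ → ℂ,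
            ContinuousOn g (Sawtooth E z₀.re z₀.im ∪ ((fun x : ℝ => (x : ℂ)) '' E)) ∧
            Set.EqOn g f (Sawtooth E z₀.re z₀.im) ∧
            ENNReal.ofReal (c * ‖deriv f z₀‖ ^ α) * hContent α E ≤
              hContent α (g '' ((fun x : ℝ => (x : ℂ)) '' E)) :=
  image_content_lower_bound_general α hα0 C hC
end
end
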